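/- Let 0 < σ < 1, 1 ≤ q ≤ p, and let v : ℝ^N → ℝ be measurable with support in the ball B_R of radius R > 0. Then [v]_{𝓑^σ_{q,∞}} ≤ C(N,p,q) · R^{N/q - N/p} · [v]_{𝓑^σ_{p,∞}}, where C(N,p,q) is a constant depending only on N, p, q. -/

import Mathlib

open MeasureTheory

/-- First-order Besov seminorm `sup_{h ≠ 0} |h|^{-σ} ‖v(·) - v(·+h)‖_{L^p}`. -/
noncomputable def besovFirst (N : ℕ) (σ p : ℝ) (v : EuclideanSpace ℝ (Fin N) → ℝ) : ENNReal :=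
  ⨆ (h : EuclideanSpace ℝ (Fin N)) (_ : h ≠ 0),
    ENNReal.ofReal (‖h‖ ^ (-σ)) *
      eLpNorm (fun x => v x - v (x + h)) (ENNReal.ofReal p) volume

/-- For `1 ≤ q ≤ p` and `v` supported in `B_R`, one has
`[v]_{𝓑^σ_{q,∞}} ≤ C(N,p,q) R^{N/q - N/p} [v]_{𝓑^σ_{p,∞}}`. -/
theorem besov_lower_exponent_bound (N : ℕ) (p q σ : ℝ) (hσ : 0 < σ) (hσ1 : σ < 1)
    (hq : 1 ≤ q) (hqp : q ≤ p) :
    ∃ C : ℝ, 0 < C ∧ ∀ (R : ℝ), 0 < R →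
      ∀ v : EuclideanSpace ℝ (Fin N) → ℝ, Measurable v →
        Function.support v ⊆ Metric.ball (0 : EuclideanSpace ℝ (Fin N)) R →
        besovFirst N σ q v ≤
          ENNReal.ofReal (C * R ^ ((N : ℝ) / q - (N : ℝ) / p)) * besovFirst N σ p v := by
  set E := EuclideanSpace ℝ (Fin N)
  set e : ℝ := 1 / q - 1 / p with he
  have hp : (1:ℝ) ≤ p := hq.trans hqp
  have he0 : 0 ≤ e := by
    have := one_div_le_one_div_of_le (by linarith) hqp
    simpa [he] using sub_nonneg.mpr this
  set ω : ℝ := (volume (Metric.ball (0 : E) 1)).toReal with hω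
  refine ⟨max 1 ((2 * ω) ^ e), lt_of_lt_of_le one_pos (le_max_left _ _), ?_⟩
  intro R hR v hv hsupp
  rcases Nat.eq_zero_or_pos N with hN | hN
  · subst hN
    have hz : ∀ h : E, h = 0 := by
      intro h; ext i; exact isEmptyElim i
    have : besovFirst 0 σ q v = 0 := by
      refine le_antisymm ?_ zero_le
      refine iSup_le fun h => iSup_le fun hne => absurd (hz h) hne
    rw [this]; exact zero_le
  haveI : Nontrivial E :=
    Module.nontrivial_of_finrank_pos (R := ℝ) (by rw [finrank_euclideanSpace_fin]; exact hN)
  have hωpos : 0 < ω := by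
    rw [hω]
    exact ENNReal.toReal_pos (Metric.measure_ball_pos volume _ one_pos).ne' measure_ball_lt_top.ne
  -- key per-h inequality
  refine iSup_le fun h => iSup_le fun hne => ?_
  set f : E → ℝ := fun x => v x - v (x + h) with hf
  have hfm : Measurable f := hv.sub (hv.comp (measurable_add_const h))
  set s : Set E := Metric.ball (0 : E) R ∪ Metric.ball (-h) R with hs
  have hfs : Function.support f ⊆ s := by
    intro x hx
    have : v x ≠ 0 ∨ v (x + h) ≠ 0 := by
      by_contra hcon
      push_neg at hcon
      exact hx (by simp [hf, hcon.1, hcon.2])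
    rcases this with h1 | h2
    · exact Set.mem_union_left _ (hsupp h1)
    · refine Set.mem_union_right _ ?_
      have := hsupp h2
      rw [mem_ball_zero_iff] at this
      rw [Metric.mem_ball, dist_eq_norm]
      simpa [sub_neg_eq_add] using this
  have hmeas : volume s ≤ ENNReal.ofReal (2 * R ^ (N:ℝ) * ω) := by
    have h1 : volume (Metric.ball (0 : E) R) = ENNReal.ofReal (R ^ (N:ℝ)) * volume (Metric.ball (0:E) 1) := by
      rw [Measure.addHaar_ball volume _ hR.le, finrank_euclideanSpace_fin,
        Real.rpow_natCast]
    have h2 : volume (Metric.ball (-h : E) R) = ENNReal.ofReal (R ^ (N:ℝ)) * volume (Metric.ball (0:E) 1) := by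
      rw [Measure.addHaar_ball volume _ hR.le, finrank_euclideanSpace_fin,
        Real.rpow_natCast]
    have hB : volume (Metric.ball (0:E) 1) = ENNReal.ofReal ω := by
      rw [hω, ENNReal.ofReal_toReal measure_ball_lt_top.ne]
    calc volume s ≤ volume (Metric.ball (0 : E) R) + volume (Metric.ball (-h : E) R) :=
          measure_union_le _ _
      _ = ENNReal.ofReal (2 * R ^ (N:ℝ) * ω) := by
          rw [h1, h2, hB, ← ENNReal.ofReal_mul (Real.rpow_nonneg hR.le _),
            ← two_mul, ← ENNReal.ofReal_ofNat, ← ENNReal.ofReal_mul (by norm_num)]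
          ring_nf
  have hq0 : (0:ℝ) < q := lt_of_lt_of_le one_pos hq
  have hp0 : (0:ℝ) < p := lt_of_lt_of_le one_pos hp
  have key : eLpNorm f (ENNReal.ofReal q) volume ≤
      eLpNorm f (ENNReal.ofReal p) volume * ENNReal.ofReal (max 1 ((2*ω)^e) * R ^ ((N : ℝ) / q - (N : ℝ) / p)) := by
    have h1 : eLpNorm f (ENNReal.ofReal q) (volume.restrict s) ≤
        eLpNorm f (ENNReal.ofReal p) (volume.restrict s) *
          (volume.restrict s) Set.univ ^ (1 / (ENNReal.ofReal q).toReal - 1 / (ENNReal.ofReal p).toReal) :=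
      eLpNorm_le_eLpNorm_mul_rpow_measure_univ (ENNReal.ofReal_le_ofReal hqp)
        hfm.aestronglyMeasurable.restrict
    rw [eLpNorm_restrict_eq_of_support_subset hfs, eLpNorm_restrict_eq_of_support_subset hfs,
      Measure.restrict_apply_univ, ENNReal.toReal_ofReal hq0.le, ENNReal.toReal_ofReal hp0.le]
      at h1
    refine h1.trans (mul_le_mul_right ?_ _)
    calc volume s ^ e ≤ (ENNReal.ofReal (2 * R ^ (N:ℝ) * ω)) ^ e :=
          ENNReal.rpow_le_rpow hmeas he0
      _ = ENNReal.ofReal ((2 * R ^ (N:ℝ) * ω) ^ e) := by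
          rw [ENNReal.ofReal_rpow_of_pos (by positivity)]
      _ ≤ ENNReal.ofReal (max 1 ((2*ω)^e) * R ^ ((N : ℝ) / q - (N : ℝ) / p)) := by
          apply ENNReal.ofReal_le_ofReal
          have : (2 * R ^ (N:ℝ) * ω) ^ e = (2 * ω) ^ e * R ^ ((N:ℝ) * e) := by
            rw [show 2 * R ^ (N:ℝ) * ω = (2 * ω) * R ^ (N:ℝ) by ring,
              Real.mul_rpow (by positivity) (by positivity), ← Real.rpow_mul hR.le]
          rw [this]
          have hexp : (N:ℝ) * e = (N : ℝ) / q - (N : ℝ) / p := by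
            rw [he]; ring
          rw [hexp]
          exact mul_le_mul_of_nonneg_right (le_max_right _ _) (Real.rpow_nonneg hR.le _)
  calc ENNReal.ofReal (‖h‖ ^ (-σ)) * eLpNorm f (ENNReal.ofReal q) volume
      ≤ ENNReal.ofReal (‖h‖ ^ (-σ)) *
        (eLpNorm f (ENNReal.ofReal p) volume *
          ENNReal.ofReal (max 1 ((2*ω)^e) * R ^ ((N : ℝ) / q - (N : ℝ) / p))) :=
        mul_le_mul_right key _
    _ = ENNReal.ofReal (max 1 ((2*ω)^e) * R ^ ((N : ℝ) / q - (N : ℝ) / p)) *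
        (ENNReal.ofReal (‖h‖ ^ (-σ)) * eLpNorm f (ENNReal.ofReal p) volume) := by ring
    _ ≤ ENNReal.ofReal (max 1 ((2*ω)^e) * R ^ ((N : ℝ) / q - (N : ℝ) / p)) * besovFirst N σ p v := by
        refine mul_le_mul_right ?_ _
        exact le_iSup₂ (f := fun (h : E) (_ : h ≠ 0) =>
          ENNReal.ofReal (‖h‖ ^ (-σ)) * eLpNorm (fun x => v x - v (x + h)) (ENNReal.ofReal p) volume)
          h hne
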